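/- arXiv:2409.18451 — 9 statements merged into one kernel-verified Lean document; each statement's English description precedes it below -/
import Mathlib

section
/- Let X ⊆ ℝⁿ be compact and let f : ℝⁿ → ℝ be continuous on X. Suppose the following condition holds: whenever a point x ∈ X can be written as x = Σᵢ₌₁ᵏ λᵢ xᵢ with λ ∈ Δ_k and xᵢ ∈ X for i = 1,…,k, one has f(x) ≥ Σᵢ₌₁ᵏ λᵢ f(xᵢ). Then there exists a concave tent of f over X; indeed the function g(x) := sup{ Σᵢ₌₁^{n+2} λᵢ f(xᵢ) : λ ∈ Δ_{n+2}, xᵢ ∈ X, Σᵢ₌₁^{n+2} λᵢ xᵢ = x } is concave on conv(X) and agrees with f on X. -/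
/-!
The set of values in the definition of `g x` is the fibre over `x` of the convex hull `C` of the
graph of `f` on `X`: by Carathéodory's theorem in `ℝⁿ × ℝ`, whose dimension is `n + 1`, every point
of `C` is a convex combination of `n + 2` points of the graph. So `g` is the upper boundary of the
convex set `C`, which is concave over the projection `convexHull ℝ X` of `C`; the fibres are bounded
above because `f` is bounded on the compact set `X`. On `X` the hypothesis says precisely that
`f x` is an upper bound of the fibre, and it belongs to the fibre.
-/

open Module Set
open scoped Pointwise

section Caratheodory

variable {𝕜 F ι : Type*} [Field 𝕜] [LinearOrder 𝕜] [IsStrictOrderedRing 𝕜]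
  [AddCommGroup F] [Module 𝕜 F] [FiniteDimensional 𝕜 F] [Fintype ι]

/-- Carathéodory's theorem, with the surplus indices given weight zero. -/
theorem exists_convexCombination_of_mem_convexHull {s : Set F} {z : F}
    (hz : z ∈ convexHull 𝕜 s) (hι : finrank 𝕜 F + 1 ≤ Fintype.card ι) :
    ∃ (w : ι → 𝕜) (p : ι → F), (∀ i, 0 ≤ w i) ∧ ∑ i, w i = 1 ∧ (∀ i, p i ∈ s) ∧
      ∑ i, w i • p i = z := by
  obtain ⟨κ, _, q, w, hqs, hq, hw0, hw1, hwq⟩ := eq_pos_convex_span_of_mem_convexHull hz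
  obtain ⟨p₀, hp₀⟩ := (convexHull_nonempty_iff.1 ⟨z, hz⟩ : s.Nonempty)
  have hκ : Fintype.card κ ≤ Fintype.card ι :=
    hq.card_le_finrank_succ.trans ((Nat.succ_le_succ (Submodule.finrank_le _)).trans hι)
  obtain ⟨e⟩ := Function.Embedding.nonempty_of_card_le hκ
  refine ⟨Function.extend e w 0, Function.extend e q fun _ => p₀, fun j => ?_, ?_,
    fun j => ?_, ?_⟩
  · by_cases hj : ∃ i, e i = j
    · obtain ⟨i, rfl⟩ := hj
      simpa [e.injective.extend_apply] using (hw0 i).le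
    · simp [Function.extend_apply' _ _ _ hj]
  · rw [← hw1]
    refine (Fintype.sum_of_injective e e.injective _ _ (fun j hj => ?_) fun i => ?_).symm
    · exact Function.extend_apply' _ _ _ hj
    · exact (e.injective.extend_apply _ _ _).symm
  · by_cases hj : ∃ i, e i = j
    · obtain ⟨i, rfl⟩ := hj
      simpa [e.injective.extend_apply] using hqs (mem_range_self i)
    · simpa [Function.extend_apply' _ _ _ hj] using hp₀
  · rw [← hwq]
    refine (Fintype.sum_of_injective e e.injective _ _ (fun j hj => ?_) fun i => ?_).symm
    · simp [Function.extend_apply' _ _ _ hj]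
    · simp [e.injective.extend_apply]

end Caratheodory

section Graph

variable {𝕜 E ι : Type*} [Field 𝕜] [LinearOrder 𝕜] [IsStrictOrderedRing 𝕜]
  [AddCommGroup E] [Module 𝕜 E] {X : Set E} {f : E → 𝕜}

theorem mem_convexHull_graphOn_iff [FiniteDimensional 𝕜 E] [Fintype ι]
    (hι : finrank 𝕜 E + 2 ≤ Fintype.card ι) {x : E} {v : 𝕜} :
    (x, v) ∈ convexHull 𝕜 (X.graphOn f) ↔
      ∃ (lam : ι → 𝕜) (xs : ι → E), (∀ i, 0 ≤ lam i) ∧ ∑ i, lam i = 1 ∧ (∀ i, xs i ∈ X) ∧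
        ∑ i, lam i • xs i = x ∧ v = ∑ i, lam i * f (xs i) := by
  have hsum : ∀ (lam : ι → 𝕜) (xs : ι → E),
      ∑ i, lam i • (xs i, f (xs i)) = (∑ i, lam i • xs i, ∑ i, lam i * f (xs i)) := by
    intro lam xs
    ext <;> simp [Prod.fst_sum, Prod.snd_sum]
  constructor
  · intro hxv
    obtain ⟨lam, p, hlam0, hlam1, hpX, hp⟩ := exists_convexCombination_of_mem_convexHull hxv
      (by rw [finrank_prod, finrank_self]; omega)
    choose xs hxsX hxs using hpX
    simp only [← hxs, hsum, Prod.mk.injEq] at hp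
    exact ⟨lam, xs, hlam0, hlam1, hxsX, hp.1, hp.2.symm⟩
  · rintro ⟨lam, xs, hlam0, hlam1, hxsX, rfl, rfl⟩
    rw [← hsum]
    exact mem_convexHull_of_exists_fintype lam _ hlam0 hlam1 (fun i => ⟨xs i, hxsX i, rfl⟩) rfl

omit [IsStrictOrderedRing 𝕜] in
theorem image_fst_convexHull_graphOn : Prod.fst '' convexHull 𝕜 (X.graphOn f) = convexHull 𝕜 X := by
  rw [← LinearMap.coe_fst (R := 𝕜) (M₂ := 𝕜), LinearMap.image_convexHull, LinearMap.coe_fst,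
    image_fst_graphOn]

theorem convexHull_graphOn_subset_snd_le {M : 𝕜} (hM : ∀ x ∈ X, f x ≤ M) :
    convexHull 𝕜 (X.graphOn f) ⊆ {p | p.2 ≤ M} :=
  convexHull_min (by rintro _ ⟨x, hx, rfl⟩; exact hM x hx)
    (convex_halfSpace_le (LinearMap.snd 𝕜 E 𝕜).isLinear M)

end Graph

variable {E : Type*} [AddCommGroup E] [Module ℝ E]

theorem Convex.concaveOn_sSup_preimage_prodMk {C : Set (E × ℝ)} (hC : Convex ℝ C) {s : Set E}
    (hs : Convex ℝ s) (hne : ∀ x ∈ s, (Prod.mk x ⁻¹' C).Nonempty)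
    (hbdd : ∀ x ∈ s, BddAbove (Prod.mk x ⁻¹' C)) :
    ConcaveOn ℝ s fun x => sSup (Prod.mk x ⁻¹' C) := by
  refine ⟨hs, fun x hx y hy a b ha hb hab => ?_⟩
  calc a • sSup (Prod.mk x ⁻¹' C) + b • sSup (Prod.mk y ⁻¹' C)
      = sSup (a • (Prod.mk x ⁻¹' C) + b • (Prod.mk y ⁻¹' C)) := by
        rw [csSup_add ((hne x hx).smul_set) ((hbdd x hx).smul_of_nonneg ha) ((hne y hy).smul_set)
          ((hbdd y hy).smul_of_nonneg hb), Real.sSup_smul_of_nonneg ha,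
          Real.sSup_smul_of_nonneg hb]
    _ ≤ sSup (Prod.mk (a • x + b • y) ⁻¹' C) := by
        refine csSup_le_csSup (hbdd _ (hs hx hy ha hb hab))
          ((hne x hx).smul_set.add (hne y hy).smul_set) ?_
        rintro _ ⟨_, ⟨u, hu, rfl⟩, _, ⟨v, hv, rfl⟩, rfl⟩
        exact hC hu hv ha hb hab

/-- **Sufficient condition for the existence of a concave tent.**
Let `X ⊆ ℝⁿ` be compact and `f` continuous on `X`.  If whenever `x ∈ X` is a convex combination
of points of `X` the value `f x` dominates the corresponding combination of values of `f`, then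
the function
`g x = sup { ∑ i, λ i * f (xs i) : λ ∈ Δ_{n+2}, xs i ∈ X, ∑ i, λ i • xs i = x }`
is concave on `convexHull ℝ X` and agrees with `f` on `X`, i.e. it is a concave tent of `f`
over `X`. -/
theorem concave_tent_exists_of_condition {n : ℕ} (X : Set (Fin n → ℝ))
    (hXcomp : IsCompact X) (f : (Fin n → ℝ) → ℝ) (hfcont : ContinuousOn f X)
    (hcond : ∀ (k : ℕ) (lam : Fin k → ℝ) (xs : Fin k → (Fin n → ℝ)),
      (∀ i, 0 ≤ lam i) → ∑ i, lam i = 1 → (∀ i, xs i ∈ X) →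
      ∀ x ∈ X, x = ∑ i, lam i • xs i → ∑ i, lam i * f (xs i) ≤ f x)
    (g : (Fin n → ℝ) → ℝ)
    (hg : g = fun x => sSup {v : ℝ |
      ∃ (lam : Fin (n + 2) → ℝ) (xs : Fin (n + 2) → (Fin n → ℝ)),
        (∀ i, 0 ≤ lam i) ∧ ∑ i, lam i = 1 ∧ (∀ i, xs i ∈ X) ∧
        ∑ i, lam i • xs i = x ∧ v = ∑ i, lam i * f (xs i)}) :
    ConcaveOn ℝ (convexHull ℝ X) g ∧ ∀ x ∈ X, g x = f x := by
  set C := convexHull ℝ (X.graphOn f)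
  have hfiber (x : Fin n → ℝ) : Prod.mk x ⁻¹' C = {v : ℝ |
      ∃ (lam : Fin (n + 2) → ℝ) (xs : Fin (n + 2) → (Fin n → ℝ)),
        (∀ i, 0 ≤ lam i) ∧ ∑ i, lam i = 1 ∧ (∀ i, xs i ∈ X) ∧
        ∑ i, lam i • xs i = x ∧ v = ∑ i, lam i * f (xs i)} :=
    Set.ext fun _ => mem_convexHull_graphOn_iff (by simp)
  simp only [← hfiber] at hg
  subst hg
  obtain ⟨M, hM⟩ := hXcomp.bddAbove_image hfcont
  have hbdd (x : Fin n → ℝ) : BddAbove (Prod.mk x ⁻¹' C) :=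
    ⟨M, fun _ hv => convexHull_graphOn_subset_snd_le (fun y hy => hM ⟨y, hy, rfl⟩) hv⟩
  have hne (x) (hx : x ∈ convexHull ℝ X) : (Prod.mk x ⁻¹' C).Nonempty := by
    rw [← image_fst_convexHull_graphOn (f := f)] at hx
    obtain ⟨⟨_, v⟩, hv, rfl⟩ := hx
    exact ⟨v, hv⟩
  refine ⟨(convex_convexHull ℝ _).concaveOn_sSup_preimage_prodMk (convex_convexHull ℝ X) hne
    fun x _ => hbdd x, fun x hx => le_antisymm ?_ ?_⟩
  · refine csSup_le (hne x (subset_convexHull ℝ X hx)) fun v hv => ?_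
    obtain ⟨lam, xs, hlam0, hlam1, hxsX, hxs, rfl⟩ := (hfiber x).subset hv
    exact hcond _ lam xs hlam0 hlam1 hxsX x hx hxs.symm
  · exact le_csSup (hbdd x) (subset_convexHull ℝ _ ⟨x, hx, rfl⟩)
end

section
/- Let X ⊆ ℝⁿ be compact, f : ℝⁿ → ℝ, and let g be a concave tent of f over X. If x̄ ∈ conv(X) is a strict local minimizer of g over conv(X), i.e. there is ε > 0 such that g(x̄) < g(y) for all y ∈ (conv(X) ∩ B_ε(x̄)) \ {x̄}, then x̄ ∈ X and x̄ is a strict local minimizer of f over X, i.e. f(x̄) < f(y) for all y ∈ (X ∩ B_ε(x̄)) \ {x̄}. -/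
/-! A strict local minimizer `x` of a concave function on a convex set `s` is an extreme point
of `s`: if `x` lay strictly inside a segment `[x₁, x₂] ⊆ s`, shrinking that segment towards `x`
puts `x` strictly inside a segment whose endpoints are near `x`, where `g` exceeds `g x`, against
the minimum principle for concave functions. Extreme points of `convexHull ℝ X` lie in `X`, where
`g = f`. -/

open Filter Topology Set AffineMap

section

variable {E : Type*} [AddCommGroup E] [Module ℝ E] [TopologicalSpace E] [IsTopologicalAddGroup E]
  [ContinuousSMul ℝ E] {s : Set E} {x y : E}

theorem Convex.tendsto_lineMap_nhdsWithin_diff (hs : Convex ℝ s) (hx : x ∈ s) (hy : y ∈ s)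
    (hxy : x ≠ y) : Tendsto (lineMap x y) (𝓝[>] (0 : ℝ)) (𝓝[s \ {x}] x) := by
  refine tendsto_nhdsWithin_iff.2 ⟨?_, ?_⟩
  · simpa only [lineMap_apply_zero] using
      (lineMap_continuous.tendsto (0 : ℝ)).mono_left nhdsWithin_le_nhds
  · filter_upwards [Ioo_mem_nhdsGT (zero_lt_one' ℝ)] with t ht
    exact ⟨hs.lineMap_mem hx hy ⟨ht.1.le, ht.2.le⟩, by simp [hxy, ht.1.ne']⟩

theorem ConcaveOn.mem_extremePoints_of_eventually_lt {g : E → ℝ} (hg : ConcaveOn ℝ s g)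
    (hx : x ∈ s) (hmin : ∀ᶠ y in 𝓝[s \ {x}] x, g x < g y) : x ∈ s.extremePoints ℝ := by
  refine ⟨hx, fun x₁ hx₁ x₂ hx₂ hseg => ?_⟩
  by_contra! hne₁
  have hne₂ : x₂ ≠ x := by
    rintro rfl
    exact hne₁ (right_mem_openSegment_iff.1 hseg)
  have hnear : ∀ᶠ y in 𝓝[s \ {x}] x, y ∈ s ∧ g x < g y :=
    (eventually_mem_nhdsWithin.mono fun _ hy => hy.1).and hmin
  obtain ⟨t, ⟨hA, hgA⟩, hB, hgB⟩ :=
    (((hg.1.tendsto_lineMap_nhdsWithin_diff hx hx₁ hne₁.symm).eventually hnear).and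
      ((hg.1.tendsto_lineMap_nhdsWithin_diff hx hx₂ hne₂.symm).eventually hnear)).exists
  have hsegAB : x ∈ segment ℝ (lineMap x x₁ t) (lineMap x x₂ t) := by
    have := mem_image_of_mem (homothety x t) hseg
    rw [image_openSegment, homothety_apply_same] at this
    simpa only [homothety_eq_lineMap] using openSegment_subset_segment _ _ _ this
  exact (hg.min_le_of_mem_segment hA hB hsegAB).not_gt (lt_min hgA hgB)

end

theorem strict_local_min_concave_tent_general {n : ℕ} (X : Set (EuclideanSpace ℝ (Fin n)))
    (f g : EuclideanSpace ℝ (Fin n) → ℝ)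
    (hg_concave : ConcaveOn ℝ (convexHull ℝ X) g)
    (hg_agree : ∀ x ∈ X, g x = f x)
    (xb : EuclideanSpace ℝ (Fin n)) (hxb : xb ∈ convexHull ℝ X)
    (ε : ℝ) (hε : 0 < ε)
    (hmin : ∀ y ∈ (convexHull ℝ X ∩ Metric.closedBall xb ε) \ {xb}, g xb < g y) :
    xb ∈ X ∧ ∀ y ∈ (X ∩ Metric.closedBall xb ε) \ {xb}, f xb < f y := by
  have hnear : ∀ᶠ y in 𝓝[convexHull ℝ X \ {xb}] xb, g xb < g y := by
    filter_upwards [inter_mem_nhdsWithin _ (Metric.closedBall_mem_nhds xb hε),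
      self_mem_nhdsWithin] with y hball hy
    exact hmin y ⟨⟨hy.1, hball.2⟩, hy.2⟩
  have hxbX : xb ∈ X :=
    extremePoints_convexHull_subset (hg_concave.mem_extremePoints_of_eventually_lt hxb hnear)
  refine ⟨hxbX, fun y ⟨⟨hyX, hyball⟩, hyne⟩ => ?_⟩
  rw [← hg_agree xb hxbX, ← hg_agree y hyX]
  exact hmin y ⟨⟨subset_convexHull ℝ X hyX, hyball⟩, hyne⟩

/-- **Strict local minimizers of a concave tent are strict local minimizers of `f`.**
Let `X ⊆ ℝⁿ` be compact and let `g` be a concave tent of `f` over `X`.  If `xb ∈ convexHull ℝ X`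
is a strict local minimizer of `g` over `convexHull ℝ X` on the (closed Euclidean) ball of
radius `ε > 0`, then `xb ∈ X` and `xb` is a strict local minimizer of `f` over `X` on the same
ball. -/
theorem strict_local_min_concave_tent {n : ℕ} (X : Set (EuclideanSpace ℝ (Fin n)))
    (hXcomp : IsCompact X)
    (f g : EuclideanSpace ℝ (Fin n) → ℝ)
    (hg_concave : ConcaveOn ℝ (convexHull ℝ X) g)
    (hg_agree : ∀ x ∈ X, g x = f x)
    (xb : EuclideanSpace ℝ (Fin n)) (hxb : xb ∈ convexHull ℝ X)
    (ε : ℝ) (hε : 0 < ε)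
    (hmin : ∀ y ∈ (convexHull ℝ X ∩ Metric.closedBall xb ε) \ {xb}, g xb < g y) :
    xb ∈ X ∧ ∀ y ∈ (X ∩ Metric.closedBall xb ε) \ {xb}, f xb < f y :=
  strict_local_min_concave_tent_general X f g hg_concave hg_agree xb hxb ε hε hmin
end

section
/- Let X ⊆ ℝⁿ be compact and nonempty, f : ℝⁿ → ℝ, and let g be a concave tent of f over X. Then inf_{x∈X} f(x) = inf_{x∈conv(X)} g(x). Moreover, every global minimizer of f over X is a global minimizer of g over conv(X), and every global minimizer of g over conv(X) that belongs to X is a global minimizer of f over X. -/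
/-! By the minimum principle for concave functions, every value of `g` on `convexHull X` is
bounded below by a value of `g = f` on `X`, while `X ⊆ convexHull X`; so the two infima and the
two sets of minimizers in `X` coincide. -/

open Set

def IsConcaveTent (𝕜 : Type*) {E β : Type*} [Semiring 𝕜] [PartialOrder 𝕜] [AddCommMonoid E]
    [PartialOrder β] [AddCommMonoid β] [Module 𝕜 E] [SMul 𝕜 β]
    (X : Set E) (f g : E → β) : Prop :=
  ConcaveOn 𝕜 (convexHull 𝕜 X) g ∧ EqOn g f X

namespace IsConcaveTent

theorem isMinOn_of_isMinOn_convexHull {𝕜 E β : Type*} [Semiring 𝕜] [PartialOrder 𝕜]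
    [AddCommMonoid E] [PartialOrder β] [AddCommMonoid β] [Module 𝕜 E] [SMul 𝕜 β]
    {X : Set E} {f g : E → β} {x : E} (hg : IsConcaveTent 𝕜 X f g) (hx : x ∈ X)
    (hmin : IsMinOn g (convexHull 𝕜 X) x) : IsMinOn f X x := fun y hy ↦ by
  calc f x = g x := (hg.2 hx).symm
    _ ≤ g y := hmin (subset_convexHull 𝕜 X hy)
    _ = f y := hg.2 hy

variable {𝕜 E β : Type*} [Field 𝕜] [LinearOrder 𝕜] [IsStrictOrderedRing 𝕜] [AddCommGroup E]
  [Module 𝕜 E] [AddCommGroup β] {X : Set E} {f g : E → β} {x : E}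

section LinearOrder

variable [LinearOrder β] [IsOrderedAddMonoid β] [Module 𝕜 β] [IsStrictOrderedModule 𝕜 β]

theorem exists_le_of_mem_convexHull (hg : IsConcaveTent 𝕜 X f g) {y : E}
    (hy : y ∈ convexHull 𝕜 X) : ∃ z ∈ X, f z ≤ g y := by
  obtain ⟨z, hz, hzy⟩ := hg.1.exists_le_of_mem_convexHull (subset_convexHull 𝕜 X) hy
  exact ⟨z, hz, hg.2 hz ▸ hzy⟩

theorem isMinOn_convexHull (hg : IsConcaveTent 𝕜 X f g) (hx : x ∈ X) (hmin : IsMinOn f X x) :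
    IsMinOn g (convexHull 𝕜 X) x := fun y hy ↦ by
  obtain ⟨z, hz, hzy⟩ := hg.exists_le_of_mem_convexHull hy
  calc g x = f x := hg.2 hx
    _ ≤ f z := hmin hz
    _ ≤ g y := hzy

end LinearOrder

theorem sInf_image_eq [ConditionallyCompleteLinearOrder β] [IsOrderedAddMonoid β] [Module 𝕜 β]
    [IsStrictOrderedModule 𝕜 β] (hg : IsConcaveTent 𝕜 X f g) :
    sInf (f '' X) = sInf (g '' convexHull 𝕜 X) := by
  refine csInf_eq_csInf_of_forall_exists_le ?_ ?_
  · rintro _ ⟨x, hx, rfl⟩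
    exact ⟨g x, mem_image_of_mem g (subset_convexHull 𝕜 X hx), (hg.2 hx).le⟩
  · rintro _ ⟨y, hy, rfl⟩
    obtain ⟨z, hz, hzy⟩ := hg.exists_le_of_mem_convexHull hy
    exact ⟨f z, mem_image_of_mem f hz, hzy⟩

end IsConcaveTent

theorem concave_tent_same_infimum_general {n : ℕ} (X : Set (Fin n → ℝ))
    (f g : (Fin n → ℝ) → ℝ)
    (hg_concave : ConcaveOn ℝ (convexHull ℝ X) g)
    (hg_agree : ∀ x ∈ X, g x = f x) :
    sInf (f '' X) = sInf (g '' (convexHull ℝ X)) ∧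
    (∀ x ∈ X, (∀ y ∈ X, f x ≤ f y) →
      x ∈ convexHull ℝ X ∧ ∀ y ∈ convexHull ℝ X, g x ≤ g y) ∧
    (∀ x ∈ convexHull ℝ X, x ∈ X → (∀ y ∈ convexHull ℝ X, g x ≤ g y) →
      ∀ y ∈ X, f x ≤ f y) := by
  have hg : IsConcaveTent ℝ X f g := ⟨hg_concave, hg_agree⟩
  refine ⟨hg.sInf_image_eq, fun x hx hmin ↦ ⟨subset_convexHull ℝ X hx, ?_⟩, ?_⟩
  · exact hg.isMinOn_convexHull hx fun y hy ↦ hmin y hy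
  · exact fun x _ hx hmin ↦ hg.isMinOn_of_isMinOn_convexHull hx fun y hy ↦ hmin y hy

/-- **Optimizing a concave tent over the convex hull solves the original problem.**
Let `X ⊆ ℝⁿ` be compact and nonempty and let `g` be a concave tent of `f` over `X`. Then
`inf_{x ∈ X} f x = inf_{x ∈ convexHull ℝ X} g x`; every global minimizer of `f` over `X` is a
global minimizer of `g` over `convexHull ℝ X`; and every global minimizer of `g` over
`convexHull ℝ X` that belongs to `X` is a global minimizer of `f` over `X`. -/
theorem concave_tent_same_infimum {n : ℕ} (X : Set (Fin n → ℝ))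
    (hXcomp : IsCompact X) (hXne : X.Nonempty)
    (f g : (Fin n → ℝ) → ℝ)
    (hg_concave : ConcaveOn ℝ (convexHull ℝ X) g)
    (hg_agree : ∀ x ∈ X, g x = f x) :
    sInf (f '' X) = sInf (g '' (convexHull ℝ X)) ∧
    (∀ x ∈ X, (∀ y ∈ X, f x ≤ f y) →
      x ∈ convexHull ℝ X ∧ ∀ y ∈ convexHull ℝ X, g x ≤ g y) ∧
    (∀ x ∈ convexHull ℝ X, x ∈ X → (∀ y ∈ convexHull ℝ X, g x ≤ g y) →
      ∀ y ∈ X, f x ≤ f y) :=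
  concave_tent_same_infimum_general X f g hg_concave hg_agree
end

section
/- Let U ⊆ ℝ^q be a nonempty convex compact set contained in the closed Euclidean unit ball, let B be a q×n real matrix and c ∈ ℝ^q, and define f : ℝⁿ → ℝ by f(x) := sup_{u∈U} ( uᵀBx + cᵀu ). Let X ⊆ {0,1}ⁿ, and let 𝒞 be a closed convex set of symmetric (1+q+n)×(1+q+n) matrices with 𝒢(U×X) ⊆ 𝒞 ⊆ { positive semidefinite matrices }. Define g(x) := sup { tr(BΨ) + cᵀu : u ∈ ℝ^q, Ub a symmetric q×q matrix, Ψ ∈ ℝ^{n×q}, Xb a symmetric n×n matrix, such that the block matrix [[1, uᵀ, xᵀ],[u, Ub, Ψᵀ],[x, Ψ, Xb]] ∈ 𝒞, u ∈ U, diag(Xb) = x, and tr(Ub) ≤ 1 }. Then g is a concave tent of f over X: g is concave on conv(X) and g(x) = f(x) for all x ∈ X. -/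
/-!
Concavity: `blk` is affine in its data and `𝒞`, `U` are convex, so a convex combination of
feasible points for `x₁` and `x₂` is feasible for `s • x₁ + t • x₂`, with the combined
(linear) objective value.

Tightness on `X`: for binary `x` the vector `xᵢ e₀ - e_{xᵢ}` is isotropic for the PSD block
matrix (its quadratic form is `xᵢ - xᵢ² = 0`), hence lies in its kernel; the `u`-rows of that
kernel equation give `Ψ = x uᵀ`, so every feasible value is `uᵀBx + cᵀu` for some `u ∈ U`.
Conversely the rank-one lift of `(u, x)` lies in `𝒢(U × X) ⊆ 𝒞` and is feasible since
`uᵀu ≤ 1`.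
-/

noncomputable section

open Matrix

/-- Prepend a leading coordinate `1` to the vector `s`. -/
def lift1 {d : Type*} (s : d → ℝ) : (Unit ⊕ d) → ℝ := Sum.elim (fun _ => (1 : ℝ)) s

/-- `𝒢(S)`: the closed convex hull of the rank-one matrices `(1,s)(1,s)ᵀ`, `s ∈ S`. -/
def GSet {d : Type*} (S : Set (d → ℝ)) : Set (Matrix (Unit ⊕ d) (Unit ⊕ d) ℝ) :=
  closure (convexHull ℝ {M | ∃ s ∈ S, M = vecMulVec (lift1 s) (lift1 s)})

/-- The bordered matrix `[[1, xᵀ], [x, Xb]]`. -/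
def corner {d : Type*} (x : d → ℝ) (Xb : Matrix d d ℝ) :
    Matrix (Unit ⊕ d) (Unit ⊕ d) ℝ :=
  Matrix.fromBlocks (Matrix.of fun _ _ => (1 : ℝ)) (Matrix.of fun _ j => x j)
    (Matrix.of fun i _ => x i) Xb

/-- The block matrix `[[1, uᵀ, xᵀ], [u, Ub, Ψᵀ], [x, Ψ, Xb]]`. -/
def blk {q n : ℕ} (u : Fin q → ℝ) (x : Fin n → ℝ) (Ub : Matrix (Fin q) (Fin q) ℝ)
    (Ψ : Matrix (Fin n) (Fin q) ℝ) (Xb : Matrix (Fin n) (Fin n) ℝ) :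
    Matrix (Unit ⊕ (Fin q ⊕ Fin n)) (Unit ⊕ (Fin q ⊕ Fin n)) ℝ :=
  corner (Sum.elim u x) (Matrix.fromBlocks Ub Ψᵀ Ψ Xb)

section Corner

variable {d : Type*}

lemma corner_convexComb {s t : ℝ} (hst : s + t = 1) (y y' : d → ℝ) (Y Y' : Matrix d d ℝ) :
    s • corner y Y + t • corner y' Y' = corner (s • y + t • y') (s • Y + t • Y') := by
  ext (_ | k) (_ | l) <;> simp [corner, hst]

lemma corner_vecMulVec (y : d → ℝ) :
    corner y (vecMulVec y y) = vecMulVec (lift1 y) (lift1 y) := by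
  ext (_ | k) (_ | l) <;> simp [corner, lift1, vecMulVec_apply]

variable [Fintype d] [DecidableEq d]

lemma Matrix.PosSemidef.corner_apply_eq_mul {y : d → ℝ} {Y : Matrix d d ℝ}
    (hM : (corner y Y).PosSemidef) {k : d} (hdiag : Y k k = y k) (hk : y k * y k = y k)
    (l : d) : Y l k = y l * y k := by
  set v : Unit ⊕ d → ℝ := Sum.elim (fun _ => y k) (-Pi.single k 1)
  have hquad : star v ⬝ᵥ corner y Y *ᵥ v = 0 := by
    simp [v, corner, dotProduct, mulVec, Fintype.sum_sum_type, Pi.single_apply, hdiag, hk]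
  have hrow : y l * y k - Y l k = 0 := by
    simpa [v, corner, mulVec, dotProduct, Fintype.sum_sum_type, Pi.single_apply, sub_eq_add_neg]
      using congrFun ((hM.dotProduct_mulVec_zero_iff v).1 hquad) (Sum.inr l)
  linarith

end Corner

lemma blk_convexComb {q n : ℕ} {s t : ℝ} (hst : s + t = 1)
    (u₁ u₂ : Fin q → ℝ) (x₁ x₂ : Fin n → ℝ) (Ub₁ Ub₂ : Matrix (Fin q) (Fin q) ℝ)
    (Ψ₁ Ψ₂ : Matrix (Fin n) (Fin q) ℝ) (Xb₁ Xb₂ : Matrix (Fin n) (Fin n) ℝ) :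
    s • blk u₁ x₁ Ub₁ Ψ₁ Xb₁ + t • blk u₂ x₂ Ub₂ Ψ₂ Xb₂
      = blk (s • u₁ + t • u₂) (s • x₁ + t • x₂) (s • Ub₁ + t • Ub₂)
          (s • Ψ₁ + t • Ψ₂) (s • Xb₁ + t • Xb₂) := by
  rw [blk, blk, blk, corner_convexComb hst, fromBlocks_smul, fromBlocks_smul, fromBlocks_add,
    transpose_add, transpose_smul, transpose_smul]
  congr 1
  ext (i | i) <;> rfl

lemma blk_vecMulVec {q n : ℕ} (u : Fin q → ℝ) (x : Fin n → ℝ) :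
    blk u x (vecMulVec u u) (vecMulVec x u) (vecMulVec x x)
      = vecMulVec (lift1 (Sum.elim u x)) (lift1 (Sum.elim u x)) := by
  rw [← corner_vecMulVec, blk, transpose_vecMulVec]
  congr 1
  ext (i | i) (j | j) <;> rfl

lemma trace_mul_vecMulVec {m n : Type*} [Fintype m] [Fintype n] (B : Matrix m n ℝ)
    (x : n → ℝ) (u : m → ℝ) : trace (B * vecMulVec x u) = u ⬝ᵥ B *ᵥ x := by
  rw [mul_vecMulVec, trace_vecMulVec, dotProduct_comm]

namespace EReal

lemma exists_lt_coe_mul_of_lt_coe_mul_sSup {s : ℝ} (hs : 0 < s) {A : Set EReal} {d : EReal}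
    (hd : d < s * sSup A) : ∃ v ∈ A, d < s * v := by
  have hdiv (a : EReal) : d / s < a ↔ d < a * s := div_lt_iff (EReal.coe_pos.2 hs) (coe_ne_top s)
  obtain ⟨v, hv, hlt⟩ := lt_sSup_iff.1 ((hdiv _).2 (mul_comm (s : EReal) _ ▸ hd))
  exact ⟨v, hv, mul_comm v (s : EReal) ▸ (hdiv v).1 hlt⟩

lemma coe_mul_sSup_add_coe_mul_sSup_le {s t : ℝ} (hs : 0 < s) (ht : 0 < t)
    {A₁ A₂ A : Set EReal} (h : ∀ a ∈ A₁, ∀ b ∈ A₂, (s : EReal) * a + t * b ∈ A) :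
    (s : EReal) * sSup A₁ + t * sSup A₂ ≤ sSup A := by
  refine add_le_of_forall_lt fun a' ha' b' hb' => ?_
  obtain ⟨a, ha, ha'⟩ := exists_lt_coe_mul_of_lt_coe_mul_sSup hs ha'
  obtain ⟨b, hb, hb'⟩ := exists_lt_coe_mul_of_lt_coe_mul_sSup ht hb'
  exact (add_le_add ha'.le hb'.le).trans (le_sSup (h a ha b hb))

lemma sSup_image_coe_of_isCompact {K : Set ℝ} (hK : IsCompact K) (hne : K.Nonempty) :
    sSup (((↑) : ℝ → EReal) '' K) = ↑(sSup K) :=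
  (coe_strictMono.monotone.map_isGreatest (hK.isGreatest_sSup hne)).csSup_eq

end EReal

section TentValues

variable {n q : ℕ} (𝒞 : Set (Matrix (Unit ⊕ (Fin q ⊕ Fin n)) (Unit ⊕ (Fin q ⊕ Fin n)) ℝ))
  (U : Set (Fin q → ℝ)) (B : Matrix (Fin q) (Fin n) ℝ) (c : Fin q → ℝ)

def tentValues (x : Fin n → ℝ) : Set EReal := {v : EReal |
  ∃ (u : Fin q → ℝ) (Ub : Matrix (Fin q) (Fin q) ℝ) (Ψ : Matrix (Fin n) (Fin q) ℝ)
    (Xb : Matrix (Fin n) (Fin n) ℝ),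
    Ub.IsSymm ∧ Xb.IsSymm ∧ blk u x Ub Ψ Xb ∈ 𝒞 ∧ u ∈ U ∧
    (∀ i, Xb i i = x i) ∧ Matrix.trace Ub ≤ 1 ∧
    v = ((Matrix.trace (B * Ψ) + c ⬝ᵥ u : ℝ) : EReal)}

variable {𝒞 U B c}

lemma coe_mul_add_coe_mul_mem_tentValues (h𝒞 : Convex ℝ 𝒞) (hU : Convex ℝ U)
    {s t : ℝ} (hs : 0 ≤ s) (ht : 0 ≤ t) (hst : s + t = 1) {x₁ x₂ : Fin n → ℝ} {a b : EReal}
    (ha : a ∈ tentValues 𝒞 U B c x₁) (hb : b ∈ tentValues 𝒞 U B c x₂) :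
    (s : EReal) * a + t * b ∈ tentValues 𝒞 U B c (s • x₁ + t • x₂) := by
  obtain ⟨u₁, Ub₁, Ψ₁, Xb₁, hUb₁, hXb₁, hC₁, hu₁, hdiag₁, htr₁, rfl⟩ := ha
  obtain ⟨u₂, Ub₂, Ψ₂, Xb₂, hUb₂, hXb₂, hC₂, hu₂, hdiag₂, htr₂, rfl⟩ := hb
  refine ⟨s • u₁ + t • u₂, s • Ub₁ + t • Ub₂, s • Ψ₁ + t • Ψ₂, s • Xb₁ + t • Xb₂,
    (hUb₁.smul s).add (hUb₂.smul t), (hXb₁.smul s).add (hXb₂.smul t),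
    blk_convexComb hst .. ▸ h𝒞 hC₁ hC₂ hs ht hst, hU hu₁ hu₂ hs ht hst,
    fun i => by simp [hdiag₁ i, hdiag₂ i], ?_, ?_⟩
  · rw [trace_add, trace_smul, trace_smul, smul_eq_mul, smul_eq_mul]
    nlinarith
  · rw [← EReal.coe_mul, ← EReal.coe_mul, ← EReal.coe_add, EReal.coe_eq_coe_iff]
    simp only [Matrix.mul_add, Matrix.mul_smul, trace_add, trace_smul, dotProduct_add,
      dotProduct_smul, smul_eq_mul]
    ring

lemma tentValues_subset_of_posSemidef (h𝒞 : ∀ M ∈ 𝒞, M.PosSemidef) {x : Fin n → ℝ}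
    (hx : ∀ i, x i * x i = x i) :
    tentValues 𝒞 U B c x ⊆ (↑) '' ((fun u => u ⬝ᵥ B *ᵥ x + c ⬝ᵥ u) '' U) := by
  rintro _ ⟨u, Ub, Ψ, Xb, -, -, hC, hu, hdiag, -, rfl⟩
  have hΨ : Ψ = vecMulVec x u := by
    ext i j
    exact ((h𝒞 _ hC).corner_apply_eq_mul (k := .inr i) (hdiag i) (hx i) (.inl j)).trans
      (mul_comm _ _)
  exact ⟨_, ⟨u, hu, rfl⟩, by rw [hΨ, trace_mul_vecMulVec]⟩

lemma coe_mem_tentValues {X : Set (Fin n → ℝ)}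
    (h𝒞 : GSet {w : Fin q ⊕ Fin n → ℝ | ∃ u ∈ U, ∃ x ∈ X, w = Sum.elim u x} ⊆ 𝒞)
    (hU : ∀ u ∈ U, u ⬝ᵥ u ≤ 1) {x : Fin n → ℝ} (hxX : x ∈ X) (hx : ∀ i, x i * x i = x i)
    {u : Fin q → ℝ} (hu : u ∈ U) :
    ((u ⬝ᵥ B *ᵥ x + c ⬝ᵥ u : ℝ) : EReal) ∈ tentValues 𝒞 U B c x := by
  refine ⟨u, vecMulVec u u, vecMulVec x u, vecMulVec x x, transpose_vecMulVec u u,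
    transpose_vecMulVec x x, ?_, hu, hx, trace_vecMulVec u u ▸ hU u hu,
    by rw [trace_mul_vecMulVec]⟩
  rw [blk_vecMulVec]
  exact h𝒞 (subset_closure (subset_convexHull ℝ _ ⟨_, ⟨u, hu, x, hxX, rfl⟩, rfl⟩))

end TentValues

theorem concave_tent_over_boolean_general {n q : ℕ}
    (U : Set (Fin q → ℝ)) (hUne : U.Nonempty) (hUconv : Convex ℝ U)
    (hUcomp : IsCompact U) (hUball : ∀ u ∈ U, u ⬝ᵥ u ≤ 1)
    (B : Matrix (Fin q) (Fin n) ℝ) (c : Fin q → ℝ)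
    (f : (Fin n → ℝ) → ℝ)
    (hf : f = fun x => sSup ((fun u => u ⬝ᵥ B.mulVec x + c ⬝ᵥ u) '' U))
    (X : Set (Fin n → ℝ)) (hX01 : ∀ x ∈ X, ∀ i, x i = 0 ∨ x i = 1)
    (𝒞 : Set (Matrix (Unit ⊕ (Fin q ⊕ Fin n)) (Unit ⊕ (Fin q ⊕ Fin n)) ℝ))
    (h𝒞convex : Convex ℝ 𝒞)
    (h𝒞low : GSet {w : Fin q ⊕ Fin n → ℝ | ∃ u ∈ U, ∃ x ∈ X, w = Sum.elim u x} ⊆ 𝒞)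
    (h𝒞psd : ∀ M ∈ 𝒞, M.PosSemidef)
    (g : (Fin n → ℝ) → EReal)
    (hg : g = fun x => sSup {v : EReal |
      ∃ (u : Fin q → ℝ) (Ub : Matrix (Fin q) (Fin q) ℝ) (Ψ : Matrix (Fin n) (Fin q) ℝ)
        (Xb : Matrix (Fin n) (Fin n) ℝ),
        Ub.IsSymm ∧ Xb.IsSymm ∧ blk u x Ub Ψ Xb ∈ 𝒞 ∧ u ∈ U ∧
        (∀ i, Xb i i = x i) ∧ Matrix.trace Ub ≤ 1 ∧
        v = ((Matrix.trace (B * Ψ) + c ⬝ᵥ u : ℝ) : EReal)}) :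
    (∀ x₁ ∈ convexHull ℝ X, ∀ x₂ ∈ convexHull ℝ X, ∀ s t : ℝ,
      0 ≤ s → 0 ≤ t → s + t = 1 →
      (s : EReal) * g x₁ + (t : EReal) * g x₂ ≤ g (s • x₁ + t • x₂)) ∧
    (∀ x ∈ X, g x = ((f x : ℝ) : EReal)) := by
  obtain rfl : g = fun x => sSup (tentValues 𝒞 U B c x) := hg
  subst hf
  refine ⟨fun x₁ _ x₂ _ s t hs ht hst => ?_, fun x hx => ?_⟩
  · rcases hs.eq_or_lt with rfl | hs
    · obtain rfl : t = 1 := by linarith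
      simp
    rcases ht.eq_or_lt with rfl | ht
    · obtain rfl : s = 1 := by linarith
      simp
    exact EReal.coe_mul_sSup_add_coe_mul_sSup_le hs ht fun a ha b hb =>
      coe_mul_add_coe_mul_mem_tentValues h𝒞convex hUconv hs.le ht.le hst ha hb
  · have hidem (i : Fin n) : x i * x i = x i := by rcases hX01 x hx i with h | h <;> simp [h]
    have hK : IsCompact ((fun u => u ⬝ᵥ B *ᵥ x + c ⬝ᵥ u) '' U) :=
      hUcomp.image (by fun_prop)
    have hvalues : tentValues 𝒞 U B c x = (↑) '' ((fun u => u ⬝ᵥ B *ᵥ x + c ⬝ᵥ u) '' U) := by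
      refine (tentValues_subset_of_posSemidef h𝒞psd hidem).antisymm ?_
      rintro _ ⟨_, ⟨u, hu, rfl⟩, rfl⟩
      exact coe_mem_tentValues h𝒞low hUball hx hidem hu
    exact (congrArg sSup hvalues).trans (EReal.sSup_image_coe_of_isCompact hK (hUne.image _))

/-- **Concave tents of convex functions over subsets of `{0,1}ⁿ` (Theorem 5).**
Let `U ⊆ ℝ^q` be nonempty, convex, compact and contained in the closed Euclidean unit ball,
`f x = sup_{u ∈ U} (uᵀ B x + cᵀ u)`, and `X ⊆ {0,1}ⁿ`.  Let `𝒞` be a closed convex set of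
symmetric matrices with `𝒢(U × X) ⊆ 𝒞 ⊆ PSD`.  Then the optimal value function
`g x = sup { tr(BΨ) + cᵀu : blk(u,x,Ub,Ψ,Xb) ∈ 𝒞, u ∈ U, diag Xb = x, tr Ub ≤ 1 }`
is a concave tent of `f` over `X`: it is concave on `convexHull ℝ X` (in the extended-real
sense) and agrees with `f` on `X`. -/
theorem concave_tent_over_boolean {n q : ℕ}
    (U : Set (Fin q → ℝ)) (hUne : U.Nonempty) (hUconv : Convex ℝ U)
    (hUcomp : IsCompact U) (hUball : ∀ u ∈ U, u ⬝ᵥ u ≤ 1)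
    (B : Matrix (Fin q) (Fin n) ℝ) (c : Fin q → ℝ)
    (f : (Fin n → ℝ) → ℝ)
    (hf : f = fun x => sSup ((fun u => u ⬝ᵥ B.mulVec x + c ⬝ᵥ u) '' U))
    (X : Set (Fin n → ℝ)) (hX01 : ∀ x ∈ X, ∀ i, x i = 0 ∨ x i = 1)
    (𝒞 : Set (Matrix (Unit ⊕ (Fin q ⊕ Fin n)) (Unit ⊕ (Fin q ⊕ Fin n)) ℝ))
    (h𝒞closed : IsClosed 𝒞) (h𝒞convex : Convex ℝ 𝒞)
    (h𝒞low : GSet {w : Fin q ⊕ Fin n → ℝ | ∃ u ∈ U, ∃ x ∈ X, w = Sum.elim u x} ⊆ 𝒞)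
    (h𝒞psd : ∀ M ∈ 𝒞, M.PosSemidef)
    (g : (Fin n → ℝ) → EReal)
    (hg : g = fun x => sSup {v : EReal |
      ∃ (u : Fin q → ℝ) (Ub : Matrix (Fin q) (Fin q) ℝ) (Ψ : Matrix (Fin n) (Fin q) ℝ)
        (Xb : Matrix (Fin n) (Fin n) ℝ),
        Ub.IsSymm ∧ Xb.IsSymm ∧ blk u x Ub Ψ Xb ∈ 𝒞 ∧ u ∈ U ∧
        (∀ i, Xb i i = x i) ∧ Matrix.trace Ub ≤ 1 ∧
        v = ((Matrix.trace (B * Ψ) + c ⬝ᵥ u : ℝ) : EReal)}) :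
    (∀ x₁ ∈ convexHull ℝ X, ∀ x₂ ∈ convexHull ℝ X, ∀ s t : ℝ,
      0 ≤ s → 0 ≤ t → s + t = 1 →
      (s : EReal) * g x₁ + (t : EReal) * g x₂ ≤ g (s • x₁ + t • x₂)) ∧
    (∀ x ∈ X, g x = ((f x : ℝ) : EReal)) :=
  concave_tent_over_boolean_general U hUne hUconv hUcomp hUball B c f hf X hX01 𝒞 h𝒞convex h𝒞low
    h𝒞psd g hg
end
end

section
/- Let A₁,…,A_m be symmetric n×n real matrices and a₁,…,a_m ∈ ℝⁿ, and define the linear map 𝒜 : Sym(n)×ℝⁿ → ℝᵐ by 𝒜(Xb,x)ᵢ = tr(AᵢXb) + aᵢᵀx. Then the following are equivalent: (i) the only positive semidefinite matrix Xb with 𝒜(Xb,0) = 0 is Xb = 0; (ii) there exists λ ∈ ℝᵐ such that Σᵢ₌₁ᵐ λᵢAᵢ is positive definite. -/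
/-!
If `P = ∑ λᵢ Aᵢ` is positive definite, then for `X ⪰ 0` the sum `∑ λᵢ tr(Aᵢ X) = tr(P X)`
vanishes only at `X = 0`. Conversely, the spectraplex `{X ⪰ 0, tr X = 1}` is compact and convex,
so its image under `X ↦ (tr(Aᵢ X))ᵢ` is a compact convex set which, by hypothesis, misses `0`.
A separating functional `y ↦ ∑ λᵢ yᵢ` is then positive on it, and testing against
`X = x xᵀ / ‖x‖²` shows that `∑ λᵢ Aᵢ` is positive definite.
-/

open Matrix
open scoped ComplexOrder

namespace Matrix

variable {n : Type*} [Fintype n]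

section RCLike

variable {𝕜 : Type*} [RCLike 𝕜]

theorem PosDef.trace_mul_eq_zero_iff {P X : Matrix n n 𝕜} (hP : P.PosDef)
    (hX : X.PosSemidef) : (P * X).trace = 0 ↔ X = 0 := by
  classical
  refine ⟨fun h => ?_, fun h => by simp [h]⟩
  open scoped MatrixOrder in
  obtain ⟨B, rfl⟩ := CStarAlgebra.nonneg_iff_eq_star_mul_self.mp hX.nonneg
  obtain ⟨C, hC, rfl⟩ :=
    CStarAlgebra.isStrictlyPositive_iff_eq_star_mul_self.mp hP.isStrictlyPositive
  -- `tr(CᴴC BᴴB)` is the squared Frobenius norm of `C Bᴴ`, and `C` is invertible.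
  have hCB : C * Bᴴ = 0 := by
    rw [← trace_conjTranspose_mul_self_eq_zero_iff, ← h]
    simp only [conjTranspose_mul, conjTranspose_conjTranspose, star_eq_conjTranspose,
      Matrix.mul_assoc]
    rw [trace_mul_comm]
    simp only [Matrix.mul_assoc]
  rw [hC.mul_right_eq_zero] at hCB
  simp [star_eq_conjTranspose, hCB]

theorem isClosed_setOf_posSemidef :
    IsClosed {X : Matrix n n 𝕜 | X.PosSemidef} := by
  simp only [posSemidef_iff_dotProduct_mulVec, Set.ofPred_and, Set.ofPred_forall]
  exact (isClosed_eq continuous_id.matrix_conjTranspose continuous_id).inter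
    (isClosed_iInter fun x => isClosed_le continuous_const (by fun_prop))

end RCLike

theorem PosSemidef.abs_apply_le_trace {X : Matrix n n ℝ} (hX : X.PosSemidef) (i j : n) :
    |X i j| ≤ X.trace := by
  have hdiag (k : n) : X k k ≤ X.trace :=
    Finset.single_le_sum (f := fun l => X l l) (fun l _ => hX.diag_nonneg) (Finset.mem_univ k)
  have hminor := (hX.submatrix ![i, j]).det_nonneg
  rw [det_fin_two] at hminor
  simp only [submatrix_apply, cons_val_zero, cons_val_one] at hminor
  have hsymm : X j i = X i j := by simpa using hX.isHermitian.apply i j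
  rw [hsymm] at hminor
  refine abs_le_of_sq_le_sq ?_ hX.trace_nonneg
  nlinarith [hdiag i, hdiag j, hX.diag_nonneg (i := i), hX.diag_nonneg (i := j)]

def spectraplex (n : Type*) [Fintype n] : Set (Matrix n n ℝ) := {X | X.PosSemidef ∧ X.trace = 1}

theorem isCompact_spectraplex : IsCompact (spectraplex n) := by
  have hcube := isCompact_univ_pi fun _ : n => isCompact_univ_pi fun _ : n =>
    isCompact_Icc (a := (-1 : ℝ)) (b := 1)
  refine hcube.of_isClosed_subset
    (isClosed_setOf_posSemidef.inter (isClosed_eq continuous_id.matrix_trace continuous_const)) ?_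
  rintro X ⟨hX, htr⟩
  simp only [Set.mem_pi, Set.mem_univ, forall_const, Set.mem_Icc, ← abs_le]
  intro i j
  simpa [htr] using hX.abs_apply_le_trace i j

theorem convex_spectraplex : Convex ℝ (spectraplex n) := by
  have hpsd : Convex ℝ {X : Matrix n n ℝ | X.PosSemidef} :=
    fun _ hX _ hY _ _ ha hb _ => (hX.smul ha).add (hY.smul hb)
  exact hpsd.inter ((convex_singleton 1).linear_preimage (traceLinearMap n ℝ ℝ))

theorem posDef_of_forall_mem_spectraplex_trace_mul_pos {P : Matrix n n ℝ} (hP : P.IsHermitian)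
    (h : ∀ X ∈ spectraplex n, 0 < (P * X).trace) : P.PosDef := by
  refine PosDef.of_dotProduct_mulVec_pos hP fun x hx => ?_
  have hxx : 0 < x ⬝ᵥ x := by simpa using dotProduct_star_self_pos_iff.mpr hx
  have hpsd : (vecMulVec x x).PosSemidef := by simpa using posSemidef_vecMulVec_self_star x
  have hmem : (x ⬝ᵥ x)⁻¹ • vecMulVec x x ∈ spectraplex n :=
    ⟨hpsd.smul (inv_nonneg.mpr hxx.le), by simp [hxx.ne']⟩
  have := h _ hmem
  rw [Matrix.mul_smul, trace_smul, mul_vecMulVec, trace_vecMulVec, smul_eq_mul] at this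
  rw [star_trivial, dotProduct_comm]
  exact pos_of_mul_pos_right this (inv_nonneg.mpr hxx.le)

theorem exists_forall_mem_spectraplex_trace_sum_smul_mul_pos {ι : Type*} [Fintype ι]
    (A : ι → Matrix n n ℝ)
    (h : ∀ X : Matrix n n ℝ, X.PosSemidef → (∀ i, (A i * X).trace = 0) → X = 0) :
    ∃ lam : ι → ℝ, ∀ X ∈ spectraplex n, 0 < ((∑ i, lam i • A i) * X).trace := by
  classical
  let φ : Matrix n n ℝ →ₗ[ℝ] ι → ℝ :=
    LinearMap.pi fun i => traceLinearMap n ℝ ℝ ∘ₗ LinearMap.mulLeft ℝ (A i)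
  have hφ (X) : φ X = fun i => (A i * X).trace := rfl
  have h0 : (0 : ι → ℝ) ∉ φ '' spectraplex n := by
    rintro ⟨X, ⟨hX, htr⟩, hφX⟩
    rw [h X hX fun i => congrFun hφX i, trace_zero] at htr
    exact zero_ne_one htr
  obtain ⟨f, u, hu, hfu⟩ := geometric_hahn_banach_point_closed
    (convex_spectraplex.linear_image φ)
    (isCompact_spectraplex.image φ.continuous_of_finiteDimensional).isClosed h0
  refine ⟨fun i => f (Pi.single i 1), fun X hX => ?_⟩
  have hf : f (φ X) = ((∑ i, f (Pi.single i 1) • A i) * X).trace := by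
    conv_lhs => rw [← Finset.univ_sum_single (φ X)]
    simp only [map_sum, hφ, Finset.sum_mul, smul_mul_assoc, trace_sum, trace_smul, smul_eq_mul]
    refine Finset.sum_congr rfl fun i _ => ?_
    rw [mul_comm, ← smul_eq_mul (A i * X).trace, ← map_smul, ← Pi.single_smul', smul_eq_mul,
      mul_one]
  rw [← hf]
  exact (map_zero f ▸ hu).trans (hfu _ (Set.mem_image_of_mem φ hX))

end Matrix

/-- **Lemma 4 (characterization of condition (N2)).**
For the linear map `𝒜(Xb, x)ᵢ = tr(Aᵢ Xb) + aᵢᵀx` built from symmetric matrices `Aᵢ` and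
vectors `aᵢ`, the only positive semidefinite `Xb` with `𝒜(Xb, 0) = 0` is `Xb = 0` if and only
if some linear combination `∑ i, λ i • A i` is positive definite. -/
theorem psd_kernel_trivial_iff_posdef_combination {n m : ℕ}
    (A : Fin m → Matrix (Fin n) (Fin n) ℝ) (hA : ∀ i, (A i).IsSymm)
    (a : Fin m → (Fin n → ℝ))
    (calA : Matrix (Fin n) (Fin n) ℝ × (Fin n → ℝ) → (Fin m → ℝ))
    (hcalA : calA = fun p i => Matrix.trace (A i * p.1) + a i ⬝ᵥ p.2) :
    (∀ Xb : Matrix (Fin n) (Fin n) ℝ, Xb.PosSemidef → calA (Xb, 0) = 0 → Xb = 0) ↔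
      ∃ lam : Fin m → ℝ, (∑ i, lam i • A i).PosDef := by
  subst hcalA
  simp only [dotProduct_zero, add_zero, funext_iff, Pi.zero_apply]
  constructor
  · intro h
    obtain ⟨lam, hlam⟩ := exists_forall_mem_spectraplex_trace_sum_smul_mul_pos A h
    have hsymm : (∑ i, lam i • A i).IsSymm := by
      simp [IsSymm, transpose_sum, (hA _).eq]
    exact ⟨lam, posDef_of_forall_mem_spectraplex_trace_mul_pos
      (isHermitian_iff_isSymm.mpr hsymm) hlam⟩
  · rintro ⟨lam, hP⟩ X hX hAX
    refine (hP.trace_mul_eq_zero_iff hX).1 ?_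
    simp [Finset.sum_mul, trace_sum, hAX]
end

section
/- Let G ∈ ℝ^{p×n}, f₀ ∈ ℝ^p, and set X := { x ∈ {0,1}ⁿ : Gx = f₀ }. Define the linear map 𝒜 : Sym(n)×ℝⁿ → ℝ^{n+p+p} by 𝒜(Xb,x) := ( diag(Xb) − x, Gx, diag(G·Xb·Gᵀ) ) and b := ( 0, f₀, f₀∘f₀ ) (with ∘ the entrywise product). Then: (N1) every pair (x,Xb) with [[1,xᵀ],[x,Xb]] ∈ 𝒢(X) satisfies 𝒜(Xb,x) = b, and (N2) the only positive semidefinite Xb with 𝒜(Xb,0) = 0 is Xb = 0. -/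
/-!
Every constraint of `𝒜(Xb, x) = b` is a linear equation in the bordered matrix `[[1, xᵀ], [x, Xb]]`,
so its solution set is closed and convex; it therefore contains `𝒢(X)` as soon as it contains the
generators `(1,s)(1,s)ᵀ`, and for a binary `s` with `G s = f₀` this is `s ∘ s = s` together with
`G s sᵀ Gᵀ = (G s)(G s)ᵀ`. For (N2), a positive semidefinite matrix with zero diagonal has zero
trace and hence vanishes.
-/

noncomputable section

open Matrix

def cornerPart {d : Type*} :
    Matrix (Unit ⊕ d) (Unit ⊕ d) ℝ →ₗ[ℝ] Matrix d d ℝ × (d → ℝ) where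
  toFun M := (M.toBlocks₂₂, fun i => M (Sum.inl ()) (Sum.inr i))
  map_add' _ _ := rfl
  map_smul' _ _ := rfl

@[simp]
lemma cornerPart_corner {d : Type*} (x : d → ℝ) (Xb : Matrix d d ℝ) :
    cornerPart (corner x Xb) = (Xb, x) :=
  rfl

@[simp]
lemma cornerPart_vecMulVec_lift1 {d : Type*} (s : d → ℝ) :
    cornerPart (vecMulVec (lift1 s) (lift1 s)) = (vecMulVec s s, s) := by
  ext <;> simp [cornerPart, toBlocks₂₂, vecMulVec_apply, lift1]

lemma apply_eq_of_corner_mem_GSet {d E : Type*} [Fintype d] [AddCommGroup E] [Module ℝ E]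
    [TopologicalSpace E] [IsTopologicalAddGroup E] [ContinuousSMul ℝ E] [T2Space E]
    {S : Set (d → ℝ)} (A : Matrix d d ℝ × (d → ℝ) →ₗ[ℝ] E) {b : E}
    (hS : ∀ s ∈ S, A (vecMulVec s s, s) = b) {x : d → ℝ} {Xb : Matrix d d ℝ}
    (h : corner x Xb ∈ GSet S) : A (Xb, x) = b := by
  let L := A ∘ₗ cornerPart
  have hGSet : GSet S ⊆ L ⁻¹' {b} := by
    refine closure_minimal (convexHull_min ?_ ((convex_singleton b).linear_preimage L))
      (isClosed_singleton.preimage L.continuous_of_finiteDimensional)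
    rintro _ ⟨s, hs, rfl⟩
    simpa [L] using hS s hs
  simpa [L] using hGSet h

def constraintMap {d q : Type*} [Fintype d] (G : Matrix q d ℝ) :
    Matrix d d ℝ × (d → ℝ) →ₗ[ℝ] (d → ℝ) × (q → ℝ) × (q → ℝ) where
  toFun pr := ((fun i => pr.1 i i - pr.2 i), G.mulVec pr.2, fun i => (G * pr.1 * Gᵀ) i i)
  map_add' _ _ := by
    ext <;> simp only [Prod.fst_add, Prod.snd_add, Prod.mk_add_mk, Pi.add_apply, Matrix.add_apply,
      mulVec_add, Matrix.mul_add, Matrix.add_mul]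
    ring
  map_smul' _ _ := by
    ext <;> simp only [Prod.smul_fst, Prod.smul_snd, Prod.smul_mk, Pi.smul_apply, Matrix.smul_apply,
      smul_eq_mul, Real.ringHom_apply, mulVec_smul, Matrix.mul_smul, smul_mul]
    ring

lemma constraintMap_vecMulVec_self {d q : Type*} [Fintype d] (G : Matrix q d ℝ) {s : d → ℝ}
    (hs : ∀ i, s i = 0 ∨ s i = 1) :
    constraintMap G (vecMulVec s s, s) =
      (0, G *ᵥ s, fun k => (G *ᵥ s) k * (G *ᵥ s) k) := by
  have hsq : ∀ i, s i * s i = s i := fun i => by rcases hs i with h | h <;> simp [h]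
  ext <;> simp [constraintMap, vecMulVec_apply, hsq, mul_vecMulVec, vecMulVec_mul,
    vecMul_transpose]

open scoped ComplexOrder in
lemma Matrix.PosSemidef.eq_zero_of_diag_eq_zero {d 𝕜 : Type*} [Fintype d] [RCLike 𝕜]
    {M : Matrix d d 𝕜}
    (hM : M.PosSemidef) (hdiag : ∀ i, M i i = 0) : M = 0 :=
  hM.trace_eq_zero_iff.mp (Finset.sum_eq_zero fun i _ => hdiag i)

/-- **Conditions (N1) and (N2) hold for binary sets with linear equations (Proposition 2, first
instance).**  For `X = {x ∈ {0,1}ⁿ : G x = f₀}` and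
`𝒜(Xb, x) = (diag Xb − x, G x, diag (G Xb Gᵀ))`, `b = (0, f₀, f₀ ∘ f₀)`:
(N1) every `(x, Xb)` with `[[1,xᵀ],[x,Xb]] ∈ 𝒢(X)` satisfies `𝒜(Xb, x) = b`, and
(N2) the only positive semidefinite `Xb` with `𝒜(Xb, 0) = 0` is `Xb = 0`. -/
theorem binary_linear_instance_satisfies_N1_N2 {n p : ℕ}
    (G : Matrix (Fin p) (Fin n) ℝ) (f₀ : Fin p → ℝ)
    (X : Set (Fin n → ℝ))
    (hX : X = {x | (∀ i, x i = 0 ∨ x i = 1) ∧ G.mulVec x = f₀})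
    (calA : Matrix (Fin n) (Fin n) ℝ × (Fin n → ℝ) →
      (Fin n → ℝ) × (Fin p → ℝ) × (Fin p → ℝ))
    (hcalA : calA = fun pr =>
      ((fun i => pr.1 i i - pr.2 i), G.mulVec pr.2, fun i => (G * pr.1 * Gᵀ) i i))
    (b : (Fin n → ℝ) × (Fin p → ℝ) × (Fin p → ℝ))
    (hb : b = (0, f₀, fun i => f₀ i * f₀ i)) :
    (∀ (x : Fin n → ℝ) (Xb : Matrix (Fin n) (Fin n) ℝ),
      corner x Xb ∈ GSet X → calA (Xb, x) = b) ∧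
    (∀ Xb : Matrix (Fin n) (Fin n) ℝ, Xb.PosSemidef → calA (Xb, 0) = 0 → Xb = 0) := by
  subst hX hcalA hb
  refine ⟨fun x Xb hmem => ?_, fun Xb hXb hzero => ?_⟩
  · refine apply_eq_of_corner_mem_GSet (constraintMap G) ?_ hmem
    rintro s ⟨hs, rfl⟩
    exact constraintMap_vecMulVec_self G hs
  · exact hXb.eq_zero_of_diag_eq_zero fun i => by
      simpa using congrFun (congrArg Prod.fst hzero) i
end
end

section
/- Let X ⊆ ℝⁿ, let 𝒜 : Sym(n)×ℝⁿ → ℝᵐ be a linear map and b ∈ ℝᵐ, and assume: (N1) every pair (x,Xb) with [[1,xᵀ],[x,Xb]] ∈ 𝒢(X) satisfies 𝒜(Xb,x) = b, and (N2) the only positive semidefinite Xb with 𝒜(Xb,0) = 0 is Xb = 0. Then X is bounded. -/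
/-!
If `X` is unbounded, pick `yₖ ∈ X` with `‖yₖ‖ → ∞` and `yₖ / ‖yₖ‖ → u`, `‖u‖ = 1`. For a fixed
`x ∈ X`, the convex combinations `(1 - ‖yₖ‖⁻²) (1,x)(1,x)ᵀ + ‖yₖ‖⁻² (1,yₖ)(1,yₖ)ᵀ` of points of
`𝒢(X)` converge to `[[1, xᵀ], [x, xxᵀ + uuᵀ]]`, so this matrix lies in `𝒢(X)` along with
`[[1, xᵀ], [x, xxᵀ]]`. Subtracting the two instances of (N1) gives `𝒜(uuᵀ, 0) = 0`, and (N2)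
forces `uuᵀ = 0`, contradicting `‖u‖ = 1`.
-/

noncomputable section

open Matrix

open Filter Topology

theorem Convex.add_mem_closure_of_tendsto_smul {E ι : Type*} [AddCommGroup E] [Module ℝ E]
    [TopologicalSpace E] [ContinuousAdd E] [ContinuousSMul ℝ E] {C : Set E} (hC : Convex ℝ C)
    {l : Filter ι} [l.NeBot] {a d : E} {t : ι → ℝ} {z : ι → E} (ha : a ∈ C)
    (hz : ∀ i, z i ∈ C) (ht : ∀ᶠ i in l, t i ∈ Set.Icc 0 1) (ht0 : Tendsto t l (𝓝 0))
    (hd : Tendsto (fun i => t i • z i) l (𝓝 d)) :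
    a + d ∈ closure C := by
  have hmem : ∀ᶠ i in l, (1 - t i) • a + t i • z i ∈ C := ht.mono fun i hi =>
    hC ha (hz i) (by linarith [hi.2]) hi.1 (by ring)
  have ha' : Tendsto (fun i => (1 - t i) • a) l (𝓝 a) := by
    simpa using ((tendsto_const_nhds (x := (1 : ℝ))).sub ht0).smul_const a
  exact mem_closure_of_tendsto (ha'.add hd) hmem

theorem exists_seq_tendsto_norm_atTop_of_not_isBounded {E : Type*} [NormedAddCommGroup E]
    [NormedSpace ℝ E] [ProperSpace E] {S : Set E} (hS : ¬Bornology.IsBounded S) :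
    ∃ (y : ℕ → E) (u : E), (∀ k, y k ∈ S) ∧ Tendsto (fun k => ‖y k‖) atTop atTop ∧
      Tendsto (fun k => ‖y k‖⁻¹ • y k) atTop (𝓝 u) ∧ ‖u‖ = 1 := by
  simp only [isBounded_iff_forall_norm_le, not_exists, not_forall, not_le] at hS
  choose y hyS hy using fun k : ℕ => hS k
  have hy_norm : Tendsto (fun k => ‖y k‖) atTop atTop :=
    tendsto_atTop_mono (fun k => (hy k).le) tendsto_natCast_atTop_atTop
  have hsphere : ∀ k, ‖y k‖⁻¹ • y k ∈ Metric.sphere (0 : E) 1 := fun k => by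
    have : y k ≠ 0 := norm_pos_iff.mp ((Nat.cast_nonneg k).trans_lt (hy k))
    simp [norm_smul, this]
  obtain ⟨u, hu, φ, hφ, hlim⟩ := (isCompact_sphere (0 : E) 1).tendsto_subseq hsphere
  exact ⟨y ∘ φ, u, fun k => hyS (φ k), hy_norm.comp hφ.tendsto_atTop, hlim, by simpa using hu⟩

variable {d : Type*}

theorem vecMulVec_lift1_self (s : d → ℝ) :
    vecMulVec (lift1 s) (lift1 s) = corner s (vecMulVec s s) := by
  ext (i | i) (j | j) <;> simp [lift1, corner, vecMulVec_apply]

theorem corner_mem_GSet {S : Set (d → ℝ)} {s : d → ℝ} (hs : s ∈ S) :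
    corner s (vecMulVec s s) ∈ GSet S :=
  subset_closure (subset_convexHull ℝ _ ⟨s, hs, (vecMulVec_lift1_self s).symm⟩)

theorem corner_add_vecMulVec_mem_GSet {S : Set (d → ℝ)} {s u : d → ℝ} {y : ℕ → d → ℝ}
    {c : ℕ → ℝ} (hs : s ∈ S) (hy : ∀ k, y k ∈ S) (hc : ∀ᶠ k in atTop, |c k| ≤ 1)
    (hc0 : Tendsto c atTop (𝓝 0)) (hu : Tendsto (fun k => c k • y k) atTop (𝓝 u)) :
    corner s (vecMulVec s s + vecMulVec u u) ∈ GSet S := by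
  set w : Unit ⊕ d → ℝ := Sum.elim 0 u
  have hw : Tendsto (fun k => c k • lift1 (y k)) atTop (𝓝 w) := by
    refine tendsto_pi_nhds.mpr ?_
    rintro (i | i)
    · simpa [lift1, w] using hc0
    · simpa [lift1, w] using tendsto_pi_nhds.mp hu i
  have hd : Tendsto (fun k => c k ^ 2 • vecMulVec (lift1 (y k)) (lift1 (y k))) atTop
      (𝓝 (vecMulVec w w)) := by
    simpa [Function.comp_def, pow_two, mul_smul] using
      ((continuous_id.matrix_vecMulVec continuous_id).tendsto w).comp hw
  set R := {M | ∃ s ∈ S, M = vecMulVec (lift1 s) (lift1 s)}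
  have hmem := (convex_convexHull ℝ R).add_mem_closure_of_tendsto_smul
    (subset_convexHull ℝ R ⟨s, hs, rfl⟩) (fun k => subset_convexHull ℝ R ⟨y k, hy k, rfl⟩)
    (hc.mono fun k hk => ⟨sq_nonneg _, (sq_le_one_iff_abs_le_one _).mpr hk⟩)
    (by simpa using hc0.pow 2) hd
  have hlim : vecMulVec (lift1 s) (lift1 s) + vecMulVec w w =
      corner s (vecMulVec s s + vecMulVec u u) := by
    ext (i | i) (j | j) <;> simp [lift1, corner, vecMulVec_apply, w]
  rwa [hlim] at hmem

/-- **Conditions (N1) and (N2) imply boundedness of `X` (Proposition 3, first part).**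
If the linear map `𝒜` and the right-hand side `b` satisfy (N1): every `(x, Xb)` with
`[[1,xᵀ],[x,Xb]] ∈ 𝒢(X)` fulfills `𝒜(Xb, x) = b`, and (N2): the only positive semidefinite
`Xb` with `𝒜(Xb, 0) = 0` is `Xb = 0`, then `X` is bounded. -/
theorem N1_N2_imply_bounded {n m : ℕ} (X : Set (Fin n → ℝ))
    (𝒜 : (Matrix (Fin n) (Fin n) ℝ × (Fin n → ℝ)) →ₗ[ℝ] (Fin m → ℝ)) (b : Fin m → ℝ)
    (hN1 : ∀ (x : Fin n → ℝ) (Xb : Matrix (Fin n) (Fin n) ℝ),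
      corner x Xb ∈ GSet X → 𝒜 (Xb, x) = b)
    (hN2 : ∀ Xb : Matrix (Fin n) (Fin n) ℝ, Xb.PosSemidef → 𝒜 (Xb, 0) = 0 → Xb = 0) :
    Bornology.IsBounded X := by
  by_contra hX
  obtain ⟨y, u, hyX, hy_norm, hu, hu1⟩ := exists_seq_tendsto_norm_atTop_of_not_isBounded hX
  set s := y 0
  have hc : ∀ᶠ k in atTop, |‖y k‖⁻¹| ≤ 1 := (hy_norm.eventually_ge_atTop 1).mono fun k hk => by
    simpa using inv_le_one_of_one_le₀ hk
  have hs := hN1 s _ (corner_mem_GSet (hyX 0))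
  have hsu := hN1 s _ (corner_add_vecMulVec_mem_GSet (hyX 0) hyX hc hy_norm.inv_tendsto_atTop hu)
  have hAu : 𝒜 (vecMulVec u u, 0) = 0 := by
    calc 𝒜 (vecMulVec u u, 0)
        = 𝒜 (vecMulVec s s + vecMulVec u u, s) - 𝒜 (vecMulVec s s, s) := by
          rw [← map_sub, Prod.mk_sub_mk, add_sub_cancel_left, sub_self]
      _ = 0 := by rw [hs, hsu, sub_self]
  have huu : vecMulVec u u = 0 := hN2 _ (by simpa using posSemidef_vecMulVec_self_star u) hAu
  rw [vecMulVec_eq_zero, or_self] at huu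
  simp [huu] at hu1
end
end

section
/- Let X ⊆ ℝⁿ, let 𝒜 : Sym(n)×ℝⁿ → ℝᵐ be a linear map and b ∈ ℝᵐ, and assume: (N1) every pair (x,Xb) with [[1,xᵀ],[x,Xb]] ∈ 𝒢(X) satisfies 𝒜(Xb,x) = b, and (N2) the only positive semidefinite Xb with 𝒜(Xb,0) = 0 is Xb = 0. Then every point of X is an extreme point of conv(X). -/
noncomputable section

open Matrix

/-! Every `y ∈ conv X` lifts to a point `corner y Yb` of `𝒢(X)` whose defect `Yb - y yᵀ` is
positive semidefinite: lifts of `X` have defect `0`, and for `a + c = 1` the defect of a mixture is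
`a (Yb - y yᵀ) + c (Zb - z zᵀ) + a c (y - z)(y - z)ᵀ`, the law of total variance. If
`x = a y + c z ∈ X` with `y, z ∈ conv X` and `a, c > 0`, then (N1) applied to the mixed lift and to
`corner x (x xᵀ)` puts this positive semidefinite defect into the kernel of `𝒜(·, 0)`, so (N2)
makes it vanish, which forces `y = z`. -/

section Corner

variable {d : Type*}

lemma corner_smul_add_smul {a c : ℝ} (hac : a + c = 1) (y z : d → ℝ) (Yb Zb : Matrix d d ℝ) :
    a • corner y Yb + c • corner z Zb = corner (a • y + c • z) (a • Yb + c • Zb) := by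
  ext (i | i) (j | j) <;> simp [corner, hac]

lemma corner_vecMulVec_self (x : d → ℝ) :
    corner x (vecMulVec x x) = vecMulVec (lift1 x) (lift1 x) := by
  ext (i | i) (j | j) <;> simp [corner, vecMulVec, lift1]

lemma convex_GSet (S : Set (d → ℝ)) : Convex ℝ (GSet S) :=
  (convex_convexHull ℝ _).closure

lemma corner_vecMulVec_self_mem_GSet {S : Set (d → ℝ)} {x : d → ℝ} (hx : x ∈ S) :
    corner x (vecMulVec x x) ∈ GSet S := by
  rw [corner_vecMulVec_self]
  exact subset_closure (subset_convexHull ℝ _ ⟨x, hx, rfl⟩)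

end Corner

section SecondMoment

variable {d : Type*}

lemma smul_add_smul_sub_vecMulVec {R : Type*} [CommRing R] {a c : R} (hac : a + c = 1)
    (y z : d → R) (Yb Zb : Matrix d d R) :
    a • Yb + c • Zb - vecMulVec (a • y + c • z) (a • y + c • z) =
      a • (Yb - vecMulVec y y) + c • (Zb - vecMulVec z z) + (a * c) • vecMulVec (y - z) (y - z) := by
  obtain rfl : c = 1 - a := eq_sub_of_add_eq' hac
  ext i j
  simp only [Matrix.add_apply, Matrix.sub_apply, Matrix.smul_apply, vecMulVec_apply,
    Pi.add_apply, Pi.sub_apply, Pi.smul_apply, smul_eq_mul]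
  ring

lemma posSemidef_smul_vecMulVec_self [Finite d] {t : ℝ} (ht : 0 ≤ t) (v : d → ℝ) :
    (t • vecMulVec v v).PosSemidef := by
  simpa using (posSemidef_vecMulVec_self_star v).smul ht

lemma eq_zero_of_add_smul_vecMulVec_self_eq_zero {P : Matrix d d ℝ} (hP : P.PosSemidef)
    {t : ℝ} (ht : 0 < t) {v : d → ℝ} (h : P + t • vecMulVec v v = 0) : v = 0 := by
  funext i
  have hii : P i i + t * (v i * v i) = 0 := by
    simpa [vecMulVec_apply] using congrFun (congrFun h i) i
  have hsq : t * (v i * v i) = 0 :=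
    le_antisymm (by linarith [hP.diag_nonneg (i := i)]) (mul_nonneg ht.le (mul_self_nonneg _))
  simpa [ht.ne'] using hsq

end SecondMoment

lemma exists_corner_mem_GSet_of_mem_convexHull {d : Type*} [Finite d] {S : Set (d → ℝ)}
    {y : d → ℝ} (hy : y ∈ convexHull ℝ S) :
    ∃ Yb : Matrix d d ℝ, corner y Yb ∈ GSet S ∧ (Yb - vecMulVec y y).PosSemidef := by
  refine convexHull_min (t := {y | ∃ Yb, corner y Yb ∈ GSet S ∧ (Yb - vecMulVec y y).PosSemidef})
    (fun x hx => ⟨vecMulVec x x, corner_vecMulVec_self_mem_GSet hx, by simpa using .zero⟩)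
    ?_ hy
  rintro y ⟨Yb, hYb, hPY⟩ z ⟨Zb, hZb, hPZ⟩ a c ha hc hac
  refine ⟨a • Yb + c • Zb, ?_, ?_⟩
  · rw [← corner_smul_add_smul hac]
    exact convex_GSet S hYb hZb ha hc hac
  · rw [smul_add_smul_sub_vecMulVec hac]
    exact ((hPY.smul ha).add (hPZ.smul hc)).add
      (posSemidef_smul_vecMulVec_self (mul_nonneg ha hc) _)

/-- **Conditions (N1) and (N2) imply `X` consists of extreme points of its convex hull
(Proposition 3, second part).**  If the linear map `𝒜` and right-hand side `b` satisfy
(N1): every `(x, Xb)` with `[[1,xᵀ],[x,Xb]] ∈ 𝒢(X)` fulfills `𝒜(Xb, x) = b`, and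
(N2): the only positive semidefinite `Xb` with `𝒜(Xb, 0) = 0` is `Xb = 0`, then every point of
`X` is an extreme point of `convexHull ℝ X`. -/
theorem N1_N2_imply_extreme_points {n m : ℕ} (X : Set (Fin n → ℝ))
    (𝒜 : (Matrix (Fin n) (Fin n) ℝ × (Fin n → ℝ)) →ₗ[ℝ] (Fin m → ℝ)) (b : Fin m → ℝ)
    (hN1 : ∀ (x : Fin n → ℝ) (Xb : Matrix (Fin n) (Fin n) ℝ),
      corner x Xb ∈ GSet X → 𝒜 (Xb, x) = b)
    (hN2 : ∀ Xb : Matrix (Fin n) (Fin n) ℝ, Xb.PosSemidef → 𝒜 (Xb, 0) = 0 → Xb = 0) :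
    ∀ x ∈ X, x ∈ Set.extremePoints ℝ (convexHull ℝ X) := by
  intro x hx
  refine mem_extremePoints.2 ⟨subset_convexHull ℝ X hx, fun y hy z hz hxyz => ?_⟩
  obtain ⟨a, c, ha, hc, hac, rfl⟩ := hxyz
  obtain ⟨Yb, hYb, hPY⟩ := exists_corner_mem_GSet_of_mem_convexHull hy
  obtain ⟨Zb, hZb, hPZ⟩ := exists_corner_mem_GSet_of_mem_convexHull hz
  have hmix : corner (a • y + c • z) (a • Yb + c • Zb) ∈ GSet X := by
    rw [← corner_smul_add_smul hac]
    exact convex_GSet X hYb hZb ha.le hc.le hac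
  have hPQ := (hPY.smul ha.le).add (hPZ.smul hc.le)
  have hR := posSemidef_smul_vecMulVec_self (mul_nonneg ha.le hc.le) (y - z)
  have hker : 𝒜 (a • Yb + c • Zb - vecMulVec (a • y + c • z) (a • y + c • z), 0) = 0 := by
    rw [← sub_self (a • y + c • z), ← Prod.mk_sub_mk, map_sub, hN1 _ _ hmix,
      hN1 _ _ (corner_vecMulVec_self_mem_GSet hx), sub_self]
  rw [smul_add_smul_sub_vecMulVec hac] at hker
  have hyz : y = z := sub_eq_zero.1 <|
    eq_zero_of_add_smul_vecMulVec_self_eq_zero hPQ (mul_pos ha hc) (hN2 _ (hPQ.add hR) hker)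
  subst hyz
  rw [← add_smul, hac, one_smul]
  exact ⟨rfl, rfl⟩
end
end

section
/- Let U ⊆ ℝ^q be a nonempty compact set. For a symmetric (q+1)×(q+1) matrix Ub, a matrix Ψ ∈ ℝ^{n×(q+1)}, and a symmetric n×n matrix Xb, the block matrix M := [[Ub, Ψᵀ],[Ψ, Xb]] (of size (1+q+n)×(1+q+n)) belongs to 𝒢(U×ℝⁿ) if and only if M is positive semidefinite and Ub ∈ 𝒢(U). -/
noncomputable section

open Matrix

/-- `𝒢(U × ℝⁿ)`, with the leading coordinate `1` placed in the `U`-block, realized over the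
index type `(Unit ⊕ Fin q) ⊕ Fin n`. -/
def GUR (n : ℕ) {q : ℕ} (U : Set (Fin q → ℝ)) :
    Set (Matrix ((Unit ⊕ Fin q) ⊕ Fin n) ((Unit ⊕ Fin q) ⊕ Fin n) ℝ) :=
  closure (convexHull ℝ {M | ∃ u ∈ U, ∃ x : Fin n → ℝ,
    M = vecMulVec (Sum.elim (lift1 u) x) (Sum.elim (lift1 u) x)})

/-!
Rank-one matrices `w wᵀ` are positive semidefinite and the upper left block of `w wᵀ` is
`(w ∘ inl)(w ∘ inl)ᵀ`; this gives necessity. Conversely, if `M = [[A, Cᵀ], [C, X]]` is positive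
semidefinite then `ker A ⊆ ker C`, so `C = B A`, the complement `S = X - B Cᵀ` is positive
semidefinite, and `M = P A Pᵀ + [[0, 0], [0, S]]` with `P = [1; B]`. The continuous affine map
`V ↦ P V Pᵀ + [[0, 0], [0, S]]` sends each generator `(1,u)(1,u)ᵀ` of `𝒢(U)` into the convex hull
of the generators of `𝒢(U × ℝⁿ)`: writing `S = ∑ vᵢ vᵢᵀ`, each `d = (0, vᵢ)` is absorbed through
`w wᵀ + d dᵀ = ½ (w + d)(w + d)ᵀ + ½ (w - d)(w - d)ᵀ`. Hence it maps `𝒢(U)` into `𝒢(U × ℝⁿ)`.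
-/

open Set

section ConvexHull

variable {𝕜 E F : Type*} [Ring 𝕜] [PartialOrder 𝕜]
  [AddCommGroup E] [Module 𝕜 E] [AddCommGroup F] [Module 𝕜 F]

theorem AffineMap.mapsTo_convexHull (f : E →ᵃ[𝕜] F) {s : Set E} {t : Set F}
    (h : MapsTo f s (convexHull 𝕜 t)) : MapsTo f (convexHull 𝕜 s) (convexHull 𝕜 t) :=
  convexHull_min h ((convex_convexHull 𝕜 t).affine_preimage f)

theorem AffineMap.mapsTo_closure_convexHull [TopologicalSpace E] [TopologicalSpace F]
    (f : E →ᵃ[𝕜] F) (hf : Continuous f) {s : Set E} {t : Set F}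
    (h : MapsTo f s (convexHull 𝕜 t)) :
    MapsTo f (closure (convexHull 𝕜 s)) (closure (convexHull 𝕜 t)) :=
  (f.mapsTo_convexHull h).closure hf

theorem add_mem_convexHull_of_forall_add_mem {s : Set E} {d : E}
    (h : ∀ x ∈ s, x + d ∈ convexHull 𝕜 s) {x : E} (hx : x ∈ convexHull 𝕜 s) :
    x + d ∈ convexHull 𝕜 s :=
  convexHull_min h ((convex_convexHull 𝕜 s).translate_preimage_left d) hx

end ConvexHull

theorem LinearMap.exists_comp_eq_of_ker_le {K V W X : Type*} [Field K] [AddCommGroup V]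
    [Module K V] [AddCommGroup W] [Module K W] [AddCommGroup X] [Module K X]
    (f : V →ₗ[K] W) (g : V →ₗ[K] X) (h : ker f ≤ ker g) : ∃ e : W →ₗ[K] X, e ∘ₗ f = g := by
  obtain ⟨e, he⟩ := (((ker f).liftQ g h) ∘ₗ f.quotKerEquivRange.symm.toLinearMap).exists_extend
  refine ⟨e, LinearMap.ext fun v => ?_⟩
  simpa [quotKerEquivRange_symm_apply_image] using congr($he ⟨f v, mem_range_self f v⟩)

namespace Matrix

theorem exists_eq_mul_of_mulVec_eq_zero {K l m n : Type*} [Field K] [Fintype l] [DecidableEq l]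
    [Fintype m] [DecidableEq m] {A : Matrix l m K} {C : Matrix n m K}
    (h : ∀ v, A *ᵥ v = 0 → C *ᵥ v = 0) : ∃ B : Matrix n l K, C = B * A := by
  obtain ⟨e, he⟩ := LinearMap.exists_comp_eq_of_ker_le (toLin' A) (toLin' C) fun v hv => h v hv
  refine ⟨LinearMap.toMatrix' e, ?_⟩
  rw [← LinearMap.toMatrix'_toLin' A, ← LinearMap.toMatrix'_comp, he, LinearMap.toMatrix'_toLin']

theorem convex_setOf_posSemidef {n : Type*} : Convex ℝ {M : Matrix n n ℝ | M.PosSemidef} :=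
  fun _ hA _ hB _ _ ha hb _ => (hA.smul ha).add (hB.smul hb)

variable {m n : Type*}

theorem isClosed_setOf_posSemidef_s17 [Fintype n] : IsClosed {M : Matrix n n ℝ | M.PosSemidef} := by
  have : {M : Matrix n n ℝ | M.PosSemidef} =
      {M | Mᴴ = M} ∩ ⋂ x : n → ℝ, {M | 0 ≤ star x ⬝ᵥ M *ᵥ x} := by
    ext M
    simp [posSemidef_iff_dotProduct_mulVec, IsHermitian]
  rw [this]
  exact (isClosed_eq continuous_id.matrix_conjTranspose continuous_id).inter <|
    isClosed_iInter fun x => isClosed_le continuous_const <|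
      continuous_const.dotProduct (continuous_id.matrix_mulVec continuous_const)

theorem mul_vecMulVec_mul_transpose [Fintype n] (P : Matrix m n ℝ) (w : n → ℝ) :
    P * vecMulVec w w * Pᵀ = vecMulVec (P *ᵥ w) (P *ᵥ w) := by
  rw [mul_vecMulVec, vecMulVec_mul, vecMul_transpose]

theorem PosSemidef.mulVec_eq_zero_of_fromBlocks [Fintype m] [Fintype n] {A : Matrix m m ℝ}
    {B : Matrix m n ℝ} {C : Matrix n m ℝ} {D : Matrix n n ℝ}
    (hM : (fromBlocks A B C D).PosSemidef) {v : m → ℝ} (hv : A *ᵥ v = 0) : C *ᵥ v = 0 := by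
  have hMv : fromBlocks A B C D *ᵥ Sum.elim v 0 = Sum.elim (0 : m → ℝ) (C *ᵥ v) := by
    simp [fromBlocks_mulVec, hv]
  have hzero := (hM.dotProduct_mulVec_zero_iff (Sum.elim v 0)).mp (by simp [hMv])
  simpa [hMv] using congr_arg (· ∘ Sum.inr) hzero

theorem PosSemidef.sub_mul_transpose_of_fromBlocks [Fintype m] [Fintype n] {A : Matrix m m ℝ}
    {B C : Matrix n m ℝ} {D : Matrix n n ℝ} (hM : (fromBlocks A Cᵀ C D).PosSemidef)
    (hC : C = B * A) :
    (D - B * Cᵀ).PosSemidef := by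
  classical
  have key : fromCols (-B) (1 : Matrix n n ℝ) * fromBlocks A Cᵀ C D *
      (fromCols (-B) (1 : Matrix n n ℝ))ᵀ = D - B * Cᵀ := by
    simp [transpose_fromCols, fromCols_mul_fromBlocks, fromCols_mul_fromRows, hC, neg_add_eq_sub]
  simpa [conjTranspose_eq_transpose_of_trivial, key] using
    hM.mul_mul_conjTranspose_same (fromCols (-B) (1 : Matrix n n ℝ))

theorem fromBlocks_eq_fromRows_mul_mul_transpose_add [Fintype m] [DecidableEq m]
    {A : Matrix m m ℝ} {B C : Matrix n m ℝ} (D : Matrix n n ℝ) (hA : Aᵀ = A) (hC : C = B * A) :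
    fromBlocks A Cᵀ C D =
      fromRows 1 B * A * (fromRows 1 B)ᵀ + fromBlocks 0 0 0 (D - B * Cᵀ) := by
  subst hC
  simp [transpose_fromRows, fromRows_mul, fromBlocks_add, hA, Matrix.mul_assoc]

theorem fromCols_one_zero_mul_mul_transpose [Fintype m] [Fintype n] [DecidableEq m]
    (M : Matrix (m ⊕ n) (m ⊕ n) ℝ) :
    fromCols (1 : Matrix m m ℝ) (0 : Matrix m n ℝ) * M *
      (fromCols (1 : Matrix m m ℝ) (0 : Matrix m n ℝ))ᵀ = M.toBlocks₁₁ := by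
  rw [← fromBlocks_toBlocks M]
  simp [transpose_fromCols, fromCols_mul_fromBlocks, fromCols_mul_fromRows]

end Matrix

def rankOneHull {ι : Type*} (W : Set (ι → ℝ)) : Set (Matrix ι ι ℝ) :=
  closure (convexHull ℝ ((fun w => vecMulVec w w) '' W))

section RankOneHull

variable {ι κ : Type*}

theorem rankOneHull_subset_posSemidef [Fintype ι] (W : Set (ι → ℝ)) :
    rankOneHull W ⊆ {M | M.PosSemidef} := by
  refine closure_minimal (convexHull_min ?_ convex_setOf_posSemidef) isClosed_setOf_posSemidef_s17
  rintro _ ⟨w, -, rfl⟩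
  simpa using posSemidef_vecMulVec_self_star w

theorem mul_mul_transpose_add_mem_rankOneHull [Fintype ι] {W : Set (ι → ℝ)}
    {W' : Set (κ → ℝ)} (P : Matrix κ ι ℝ) (D : Matrix κ κ ℝ)
    (h : ∀ w ∈ W, vecMulVec (P *ᵥ w) (P *ᵥ w) + D ∈ convexHull ℝ ((fun w => vecMulVec w w) '' W'))
    {V : Matrix ι ι ℝ} (hV : V ∈ rankOneHull W) : P * V * Pᵀ + D ∈ rankOneHull W' := by
  let f : Matrix ι ι ℝ →ᵃ[ℝ] Matrix κ κ ℝ :=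
    (mulRightLinearMap κ ℝ Pᵀ ∘ₗ mulLeftLinearMap ι ℝ P).toAffineMap + AffineMap.const ℝ _ D
  have hf : Continuous f :=
    ((continuous_const.matrix_mul continuous_id).matrix_mul continuous_const).add continuous_const
  refine f.mapsTo_closure_convexHull hf ?_ hV
  rintro _ ⟨w, hw, rfl⟩
  simpa [f, mul_vecMulVec_mul_transpose] using h w hw

theorem add_vecMulVec_mem_convexHull {W : Set (ι → ℝ)} {d : ι → ℝ}
    (hW : ∀ w ∈ W, w + d ∈ W ∧ w - d ∈ W) {M : Matrix ι ι ℝ}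
    (hM : M ∈ convexHull ℝ ((fun w => vecMulVec w w) '' W)) :
    M + vecMulVec d d ∈ convexHull ℝ ((fun w => vecMulVec w w) '' W) := by
  refine add_mem_convexHull_of_forall_add_mem ?_ hM
  rintro _ ⟨w, hw, rfl⟩
  have parallelogram : vecMulVec w w + vecMulVec d d =
      (1 / 2 : ℝ) • vecMulVec (w + d) (w + d) + (1 / 2 : ℝ) • vecMulVec (w - d) (w - d) := by
    ext i j
    simp only [Matrix.add_apply, Matrix.smul_apply, vecMulVec_apply, Pi.add_apply, Pi.sub_apply,
      smul_eq_mul]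
    ring
  rw [parallelogram]
  exact convex_convexHull ℝ _ (subset_convexHull ℝ _ (mem_image_of_mem _ (hW w hw).1))
    (subset_convexHull ℝ _ (mem_image_of_mem _ (hW w hw).2)) (by norm_num) (by norm_num)
    (by norm_num)

theorem add_sum_vecMulVec_mem_convexHull {α : Type*} [Fintype α] {W : Set (ι → ℝ)}
    {d : α → ι → ℝ} (hW : ∀ w ∈ W, ∀ a, w + d a ∈ W ∧ w - d a ∈ W) {M : Matrix ι ι ℝ}
    (hM : M ∈ convexHull ℝ ((fun w => vecMulVec w w) '' W)) :
    M + ∑ a, vecMulVec (d a) (d a) ∈ convexHull ℝ ((fun w => vecMulVec w w) '' W) := by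
  refine Finset.sum_induction _ (fun X => ∀ M ∈ convexHull ℝ ((fun w => vecMulVec w w) '' W),
      M + X ∈ convexHull ℝ ((fun w => vecMulVec w w) '' W)) ?_ ?_ ?_ M hM
  · intro X Y hX hY M hM
    simpa only [add_assoc] using hY _ (hX M hM)
  · simp
  · exact fun a _ M hM => add_vecMulVec_mem_convexHull (fun w hw => hW w hw a) hM

end RankOneHull

section Blocks

variable {m n : Type*} [Fintype m] [Fintype n]

theorem toBlocks₁₁_mem_rankOneHull {W : Set (m → ℝ)} {M : Matrix (m ⊕ n) (m ⊕ n) ℝ}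
    (hM : M ∈ rankOneHull {w | w ∘ Sum.inl ∈ W}) : M.toBlocks₁₁ ∈ rankOneHull W := by
  classical
  let P := fromCols (1 : Matrix m m ℝ) (0 : Matrix m n ℝ)
  have hP (w : m ⊕ n → ℝ) : P *ᵥ w = w ∘ Sum.inl := by simp [P, fromCols_mulVec]
  have := mul_mul_transpose_add_mem_rankOneHull (W' := W) P 0 (fun w hw => ?_) hM
  · simpa [P, fromCols_one_zero_mul_mul_transpose] using this
  · rw [hP, add_zero]
    exact subset_convexHull ℝ _ (mem_image_of_mem _ hw)

theorem fromBlocks_mem_rankOneHull {W : Set (m → ℝ)} {A : Matrix m m ℝ} {C : Matrix n m ℝ}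
    {D : Matrix n n ℝ} (hM : (fromBlocks A Cᵀ C D).PosSemidef) (hA : A ∈ rankOneHull W) :
    fromBlocks A Cᵀ C D ∈ rankOneHull {w | w ∘ Sum.inl ∈ W} := by
  classical
  obtain ⟨B, hC⟩ := exists_eq_mul_of_mulVec_eq_zero fun _ => hM.mulVec_eq_zero_of_fromBlocks
  have hAsymm : Aᵀ = A :=
    (isHermitian_iff_isSymm.mp (isHermitian_fromBlocks_iff.mp hM.isHermitian).1).eq
  obtain ⟨r, v, hS⟩ := posSemidef_iff_eq_sum_vecMulVec.mp (hM.sub_mul_transpose_of_fromBlocks hC)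
  have hS' : fromBlocks (0 : Matrix m m ℝ) 0 0 (D - B * Cᵀ) =
      ∑ i, vecMulVec (Sum.elim (0 : m → ℝ) (v i)) (Sum.elim 0 (v i)) := by
    rw [hS]
    ext (i | i) (j | j) <;> simp [Matrix.sum_apply, vecMulVec_apply]
  rw [fromBlocks_eq_fromRows_mul_mul_transpose_add D hAsymm hC, hS']
  refine mul_mul_transpose_add_mem_rankOneHull _ _ (fun w hw => ?_) hA
  refine add_sum_vecMulVec_mem_convexHull (fun w' hw' i => ?_)
    (subset_convexHull ℝ _ (mem_image_of_mem _ ?_))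
  · simpa [Pi.add_comp, Pi.sub_comp] using And.intro hw' hw'
  · simpa [fromRows_mulVec] using hw

theorem fromBlocks_mem_rankOneHull_iff {W : Set (m → ℝ)} {A : Matrix m m ℝ} {C : Matrix n m ℝ}
    {D : Matrix n n ℝ} :
    fromBlocks A Cᵀ C D ∈ rankOneHull {w | w ∘ Sum.inl ∈ W} ↔
      (fromBlocks A Cᵀ C D).PosSemidef ∧ A ∈ rankOneHull W :=
  ⟨fun h => ⟨rankOneHull_subset_posSemidef _ h, by simpa using toBlocks₁₁_mem_rankOneHull h⟩,
    fun h => fromBlocks_mem_rankOneHull h.1 h.2⟩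

end Blocks

theorem GSet_eq_rankOneHull {d : Type*} (S : Set (d → ℝ)) : GSet S = rankOneHull (lift1 '' S) := by
  simp only [GSet, rankOneHull, image_image]
  congr 2
  ext M
  simp [eq_comm]

theorem GUR_eq_rankOneHull (n : ℕ) {q : ℕ} (U : Set (Fin q → ℝ)) :
    GUR n U = rankOneHull {w | w ∘ Sum.inl ∈ lift1 '' U} := by
  simp only [GUR, rankOneHull]
  congr 2
  ext M
  constructor
  · rintro ⟨u, hu, x, rfl⟩
    exact ⟨Sum.elim (lift1 u) x, ⟨u, hu, rfl⟩, rfl⟩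
  · rintro ⟨w, ⟨u, hu, hw⟩, rfl⟩
    exact ⟨u, hu, w ∘ Sum.inr, by rw [hw, Sum.elim_comp_inl_inr]⟩

theorem G_of_U_times_Rn_decomposition_general {n q : ℕ}
    (U : Set (Fin q → ℝ))
    (Ub : Matrix (Unit ⊕ Fin q) (Unit ⊕ Fin q) ℝ)
    (Ψ : Matrix (Fin n) (Unit ⊕ Fin q) ℝ)
    (Xb : Matrix (Fin n) (Fin n) ℝ) :
    Matrix.fromBlocks Ub Ψᵀ Ψ Xb ∈ GUR n U ↔
      (Matrix.fromBlocks Ub Ψᵀ Ψ Xb).PosSemidef ∧ Ub ∈ GSet U := by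
  rw [GUR_eq_rankOneHull, GSet_eq_rankOneHull]
  exact fromBlocks_mem_rankOneHull_iff

/-- **Lemma 6 (decomposition of `𝒢(U × ℝⁿ)`).**
Let `U ⊆ ℝ^q` be nonempty and compact.  For a symmetric `(q+1)×(q+1)` block `Ub`, a matrix
`Ψ ∈ ℝ^{n×(q+1)}` and a symmetric `n×n` block `Xb`, the block matrix `[[Ub, Ψᵀ], [Ψ, Xb]]`
belongs to `𝒢(U × ℝⁿ)` if and only if it is positive semidefinite and `Ub ∈ 𝒢(U)`. -/
theorem G_of_U_times_Rn_decomposition {n q : ℕ}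
    (U : Set (Fin q → ℝ)) (hUne : U.Nonempty) (hUcomp : IsCompact U)
    (Ub : Matrix (Unit ⊕ Fin q) (Unit ⊕ Fin q) ℝ) (hUb : Ub.IsSymm)
    (Ψ : Matrix (Fin n) (Unit ⊕ Fin q) ℝ)
    (Xb : Matrix (Fin n) (Fin n) ℝ) (hXb : Xb.IsSymm) :
    Matrix.fromBlocks Ub Ψᵀ Ψ Xb ∈ GUR n U ↔
      (Matrix.fromBlocks Ub Ψᵀ Ψ Xb).PosSemidef ∧ Ub ∈ GSet U :=
  G_of_U_times_Rn_decomposition_general U Ub Ψ Xb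
end
end
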